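/- arXiv:2007.11174 — 4 statements merged into one kernel-verified Lean document; each statement's English description precedes it below -/
import Mathlib

section
/- Approximation of squares of operators in Schatten norms (Lemma 8): let O and Õ be operators on a finite-dimensional complex Hilbert space, let p ≥ 1, and let 0 ≤ δ ≤ 1 be such that ‖O − Õ‖_{2p} ≤ δ ‖O‖_{2p}. Then ‖O†O − Õ†Õ‖_p ≤ 3δ ‖O†O‖_p. -/
open scoped BigOperators

namespace Paper

variable {ι : Type*} [Fintype ι] [DecidableEq ι] {d : ℕ}

/-- The space of operators on a system of qudits indexed by `ι`, each of local dimension `d`. -/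
abbrev Op (ι : Type*) [Fintype ι] [DecidableEq ι] (d : ℕ) : Type _ :=
  Matrix (ι → Fin d) (ι → Fin d) ℂ

open Classical in
/-- `A` acts as the identity on all sites outside `X`. -/
def SupportedOn (X : Set ι) (A : Op ι d) : Prop :=
  ∃ B : Matrix (X → Fin d) (X → Fin d) ℂ,
    ∀ i j : ι → Fin d,
      A i j = if ∀ x ∉ X, i x = j x then B (fun x => i x.1) (fun x => j x.1) else 0

/-- Operator norm of a matrix, i.e. the norm as an operator on Euclidean space. -/
noncomputable def opNorm {m : Type*} [Fintype m] [DecidableEq m] (A : Matrix m m ℂ) : ℝ :=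
  ‖Matrix.toEuclideanCLM (𝕜 := ℂ) A‖

/-- Schatten `p`-norm `(Tr ((A† A)^{p/2}))^{1/p}` of a matrix. -/
noncomputable def schattenNorm {m : Type*} [Fintype m] [DecidableEq m] (p : ℝ)
    (A : Matrix m m ℂ) : ℝ :=
  (∑ i, (Matrix.isHermitian_conjTranspose_mul_self A).eigenvalues i ^ (p / 2)) ^ (1 / p)

/-- Matrix exponential. -/
noncomputable def mexp {m : Type*} [Fintype m] [DecidableEq m] (A : Matrix m m ℂ) :
    Matrix m m ℂ :=
  NormedSpace.exp A

/-- The Gibbs state `e^{-βH} / Tr e^{-βH}`. -/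
noncomputable def gibbs (β : ℝ) (H : Op ι d) : Op ι d :=
  (Matrix.trace (mexp ((-(β : ℂ)) • H)))⁻¹ • mexp ((-(β : ℂ)) • H)

/-- Reduced density matrix on the sites in `L` (partial trace over the complement). -/
noncomputable def restrictOut (L : Finset ι) (ρ : Op ι d) :
    Matrix ({x // x ∈ L} → Fin d) ({x // x ∈ L} → Fin d) ℂ :=
  Matrix.of fun a b =>
    ∑ c : {x // x ∉ L} → Fin d,
      ρ (fun x => if h : x ∈ L then a ⟨x, h⟩ else c ⟨x, h⟩)
        (fun x => if h : x ∈ L then b ⟨x, h⟩ else c ⟨x, h⟩)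

open Classical in
/-- Von Neumann entropy `-Tr ρ log ρ` (via eigenvalues; junk value for non-Hermitian input). -/
noncomputable def vnEntropy {m : Type*} [Fintype m] [DecidableEq m] (ρ : Matrix m m ℂ) : ℝ :=
  if h : ρ.IsHermitian then -∑ i, h.eigenvalues i * Real.log (h.eigenvalues i) else 0

open Classical in
/-- Rényi-`α` entropy; for `α = 1` this is the von Neumann entropy. -/
noncomputable def renyiEntropy {m : Type*} [Fintype m] [DecidableEq m] (α : ℝ)
    (ρ : Matrix m m ℂ) : ℝ :=
  if h : ρ.IsHermitian then
    if α = 1 then -∑ i, h.eigenvalues i * Real.log (h.eigenvalues i)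
    else (1 - α)⁻¹ * Real.log (∑ i, h.eigenvalues i ^ α)
  else 0

/-- Mutual information `S(ρ_L) + S(ρ_{Lᶜ}) - S(ρ)` for the bipartition `L ⊔ Lᶜ`. -/
noncomputable def mutualInfo (L : Finset ι) (ρ : Op ι d) : ℝ :=
  vnEntropy (restrictOut L ρ) + vnEntropy (restrictOut Lᶜ ρ) - vnEntropy ρ

/-- `O` admits a Schmidt decomposition with `m` terms across the bipartition
`Lset ⊔ Lsetᶜ`; i.e. the Schmidt rank of `O` across this cut is at most `m`. -/
def SchmidtDecompSet (Lset : Set ι) (O : Op ι d) (m : ℕ) : Prop :=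
  ∃ A B : Fin m → Op ι d,
    (∀ s, SupportedOn Lset (A s)) ∧ (∀ s, SupportedOn Lsetᶜ (B s)) ∧ O = ∑ s, A s * B s

/-- Schmidt decomposition across the cut `{1,…,i} | {i+1,…,n}` of a chain
(`0`-indexed: left part is the sites `< i`). -/
def SchmidtDecomp {n : ℕ} (i : ℕ) (O : Op (Fin n) d) (m : ℕ) : Prop :=
  SchmidtDecompSet {x : Fin n | (x : ℕ) < i} O m

/-- A function of the configuration of all sites depends only on the sites in `Lset`. -/
def DependsOnlyOn (Lset : Set ι) (f : (ι → Fin d) → ℂ) : Prop :=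
  ∀ u v : ι → Fin d, (∀ x ∈ Lset, u x = v x) → f u = f v

/-- Schmidt decomposition with `m` terms of a vector across the bipartition `Lset ⊔ Lsetᶜ`. -/
def VecSchmidtDecomp (Lset : Set ι) (ψ : (ι → Fin d) → ℂ) (m : ℕ) : Prop :=
  ∃ a b : Fin m → ((ι → Fin d) → ℂ),
    (∀ s, DependsOnlyOn Lset (a s)) ∧ (∀ s, DependsOnlyOn Lsetᶜ (b s)) ∧
      ∀ u, ψ u = ∑ s, a s u * b s u

/-- The rank-one density matrix `|ψ⟩⟨ψ|`. -/
noncomputable def pureDM (ψ : (ι → Fin d) → ℂ) : Op ι d :=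
  Matrix.of fun u v => ψ u * (starRingEnd ℂ) (ψ v)

/-- A nearest-neighbour Hamiltonian on a chain of `n` qudits: `h i` is the interaction
between sites `i` and `i+1` (`0`-indexed), and
`‖h_{i-1,i}‖ + ‖h_{i,i+1}‖ ≤ 1` for every site `i`. -/
structure NNChain (n d : ℕ) where
  h : ℕ → Op (Fin n) d
  supported : ∀ i : ℕ, SupportedOn {x : Fin n | (x : ℕ) = i ∨ (x : ℕ) = i + 1} (h i)
  hermitian : ∀ i : ℕ, (h i).IsHermitian
  norm_le : ∀ i : ℕ, 1 ≤ i → opNorm (h (i - 1)) + opNorm (h i) ≤ 1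

/-- The Hamiltonian `H = ∑_{i=1}^{n-1} h_{i,i+1}` of a nearest-neighbour chain. -/
noncomputable def NNChain.H {n d : ℕ} (C : NNChain n d) : Op (Fin n) d :=
  ∑ i ∈ Finset.range (n - 1), C.h i

/-- A `k`-local Hamiltonian on a chain of `n` qudits with interaction strength `g`:
a collection of Hermitian terms `h X` supported on sets `X` of diameter at most `k`,
with `∑_{X ∋ i} ‖h X‖ ≤ g` for every site `i`. -/
structure KLocal (n d k : ℕ) (g : ℝ) where
  h : Finset (Fin n) → Op (Fin n) d
  supported : ∀ X : Finset (Fin n), SupportedOn (X : Set (Fin n)) (h X)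
  hermitian : ∀ X : Finset (Fin n), (h X).IsHermitian
  diam_le : ∀ X : Finset (Fin n), h X ≠ 0 → ∀ x ∈ X, ∀ y ∈ X, (y : ℕ) < (x : ℕ) + k
  strength : ∀ i : Fin n,
    ∑ X ∈ Finset.univ.filter (fun X : Finset (Fin n) => i ∈ X), opNorm (h X) ≤ g
  empty_zero : h ∅ = 0

/-- The full Hamiltonian `H = ∑_X h_X` of a `k`-local chain. -/
noncomputable def KLocal.H {n d k : ℕ} {g : ℝ} (C : KLocal n d k g) : Op (Fin n) d :=
  ∑ X : Finset (Fin n), C.h X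

open scoped Matrix

/-! Write `S = O†O − Õ†Õ = O†D + D†O − D†D` with `D = O − Õ`. The norm `‖S‖_p` is attained by
pairing with a dual matrix: if `S = U diag(μ) U†`, then `C = U diag(sign μ · b^(p-1)) U†` with
`b = |μ| / ‖S‖_p` satisfies `Tr(S C) = ‖S‖_p`. Each of the three terms then obeys the
Hölder-type bound `|Tr(X†Y C)| ≤ ‖X‖_{2p} ‖Y‖_{2p}`: by Cauchy–Schwarz it suffices to bound the
`b^(p-1)`-weighted column norms of `XU`, and diagonalising `X†X = W diag(λ) W†` turns these into
an average of `λ` against the doubly stochastic matrix `|(W†U)ᵢⱼ|²`, controlled by Young's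
inequality. Hence `‖S‖_p ≤ 2‖O‖_{2p}‖D‖_{2p} + ‖D‖_{2p}² ≤ 3δ‖O‖_{2p}² = 3δ‖O†O‖_p`. -/

open Matrix Finset

lemma sum_eigenvalues_eq_of_charpoly_eq {A : Matrix ι ι ℂ} (hA : A.IsHermitian)
    {μ : ι → ℝ} (h : A.charpoly = ∏ i, (Polynomial.X - Polynomial.C (μ i : ℂ))) (f : ℝ → ℝ) :
    ∑ i, f (hA.eigenvalues i) = ∑ i, f (μ i) := by
  have hroots := hA.roots_charpoly_eq_eigenvalues
  rw [h, Polynomial.roots_prod _ _ (by simp [prod_ne_zero_iff, Polynomial.X_sub_C_ne_zero])]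
    at hroots
  have hmap : univ.val.map hA.eigenvalues = univ.val.map μ := by
    simpa [Multiset.map_map] using congrArg (Multiset.map Complex.re) hroots.symm
  simp only [sum_eq_multiset_sum, ← Function.comp_apply (f := f), ← Multiset.map_map, hmap]

lemma schattenNorm_of_isHermitian {A : Matrix ι ι ℂ} (hA : A.IsHermitian) (p : ℝ) :
    schattenNorm p A = (∑ i, |hA.eigenvalues i| ^ p) ^ (1 / p) := by
  have hsq : Aᴴ * A = cfc (fun x : ℝ => x ^ 2) A := by
    rw [cfc_pow_id A 2 hA.isSelfAdjoint, hA.eq, sq]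
  rw [schattenNorm, sum_eigenvalues_eq_of_charpoly_eq (isHermitian_conjTranspose_mul_self A)
    (μ := fun i => hA.eigenvalues i ^ 2) (by rw [hsq, hA.charpoly_cfc_eq]; rfl) (· ^ (p / 2))]
  congr 1
  refine sum_congr rfl fun i _ => ?_
  rw [← sq_abs, ← Real.rpow_natCast, ← Real.rpow_mul (abs_nonneg _)]
  ring_nf

lemma schattenNorm_nonneg (p : ℝ) (A : Matrix ι ι ℂ) : 0 ≤ schattenNorm p A :=
  Real.rpow_nonneg (sum_nonneg fun i _ =>
    Real.rpow_nonneg (eigenvalues_conjTranspose_mul_self_nonneg A i) _) _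

lemma schattenNorm_two_mul_sq {p : ℝ} (hp : p ≠ 0) (A : Matrix ι ι ℂ) :
    schattenNorm (2 * p) A ^ 2 =
      (∑ i, (isHermitian_conjTranspose_mul_self A).eigenvalues i ^ p) ^ (1 / p) := by
  rw [schattenNorm, ← Real.rpow_natCast, ← Real.rpow_mul (sum_nonneg fun i _ =>
    Real.rpow_nonneg (eigenvalues_conjTranspose_mul_self_nonneg A i) _)]
  congr 1
  · simp [mul_div_cancel_left₀]
  · field_simp; norm_num

lemma schattenNorm_conjTranspose_mul_self {p : ℝ} (hp : p ≠ 0) (A : Matrix ι ι ℂ) :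
    schattenNorm p (Aᴴ * A) = schattenNorm (2 * p) A ^ 2 := by
  rw [schattenNorm_two_mul_sq hp,
    schattenNorm_of_isHermitian (isHermitian_conjTranspose_mul_self A)]
  simp only [abs_of_nonneg (eigenvalues_conjTranspose_mul_self_nonneg A _)]

lemma mul_rpow_sub_one_le {p x y : ℝ} (hp : 1 ≤ p) (hx : 0 ≤ x) (hy : 0 ≤ y) :
    x * y ^ (p - 1) ≤ x ^ p / p + (1 - 1 / p) * y ^ p := by
  have hp0 : p ≠ 0 := by positivity
  have h := Real.geom_mean_le_arith_mean2_weighted (p₁ := x ^ p) (p₂ := y ^ p)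
    (by positivity : 0 ≤ 1 / p) (sub_nonneg.2 ((div_le_one (by positivity)).2 hp))
    (by positivity) (by positivity) (add_sub_cancel _ _)
  rwa [← Real.rpow_mul hx, ← Real.rpow_mul hy, mul_one_div_cancel hp0, Real.rpow_one,
    mul_sub, mul_one, mul_one_div_cancel hp0, one_div_mul_eq_div] at h

lemma sum_mul_mul_rpow_le_of_mem_doublyStochastic {M : Matrix ι ι ℝ}
    (hM : M ∈ doublyStochastic ℝ ι) {p : ℝ} (hp : 1 ≤ p) {a b : ι → ℝ} (ha : ∀ i, 0 ≤ a i)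
    (hb : ∀ j, 0 ≤ b j) (hb1 : ∑ j, b j ^ p ≤ 1) :
    ∑ i, ∑ j, M i j * a i * b j ^ (p - 1) ≤ (∑ i, a i ^ p) ^ (1 / p) := by
  have hp0 : p ≠ 0 := by positivity
  have hsum : 0 ≤ ∑ i, a i ^ p := sum_nonneg fun i _ => Real.rpow_nonneg (ha i) p
  set s := (∑ i, a i ^ p) ^ (1 / p)
  have hsp : s ^ p = ∑ i, a i ^ p := by simp only [s, one_div, Real.rpow_inv_rpow hsum hp0]
  rcases (show 0 ≤ s from Real.rpow_nonneg hsum _).eq_or_lt with hs | hs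
  · have ha0 : ∀ i, a i = 0 := fun i => (Real.rpow_eq_zero (ha i) hp0).1 <|
      (sum_eq_zero_iff_of_nonneg fun i _ => Real.rpow_nonneg (ha i) p).1
        (by rw [← hsp, ← hs, Real.zero_rpow hp0]) i (mem_univ i)
    simp [ha0, ← hs]
  have hsum1 : ∑ i, (a i / s) ^ p = 1 := by
    simp_rw [Real.div_rpow (ha _) hs.le, ← sum_div, ← hsp]
    exact div_self (Real.rpow_pos_of_pos hs p).ne'
  have hq : 0 ≤ 1 - 1 / p := sub_nonneg.2 ((div_le_one (by positivity)).2 hp)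
  calc ∑ i, ∑ j, M i j * a i * b j ^ (p - 1)
      = s * ∑ i, ∑ j, M i j * (a i / s * b j ^ (p - 1)) := by
        simp_rw [mul_sum]
        refine sum_congr rfl fun i _ => sum_congr rfl fun j _ => ?_
        field_simp
    _ ≤ s * ∑ i, ∑ j, M i j * ((a i / s) ^ p / p + (1 - 1 / p) * b j ^ p) := by
        gcongr with i _ j _
        · exact nonneg_of_mem_doublyStochastic hM
        · exact mul_rpow_sub_one_le hp (div_nonneg (ha i) hs.le) (hb j)
    _ = s * (1 / p * ∑ i, (a i / s) ^ p * ∑ j, M i j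
          + (1 - 1 / p) * ∑ j, b j ^ p * ∑ i, M i j) := by
        congr 1
        simp only [mul_add, sum_add_distrib, mul_sum]
        congr 1
        · exact sum_congr rfl fun i _ => sum_congr rfl fun j _ => by ring
        · rw [sum_comm]
          exact sum_congr rfl fun i _ => sum_congr rfl fun j _ => by ring
    _ ≤ s := by
        simp only [sum_row_of_mem_doublyStochastic hM, sum_col_of_mem_doublyStochastic hM,
          mul_one, hsum1]
        exact mul_le_of_le_one_right hs.le (by nlinarith [mul_le_mul_of_nonneg_left hb1 hq])

lemma conjTranspose_mul_diagonal_mul_apply_self (A : Matrix ι ι ℂ) (c : ι → ℂ) (j : ι) :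
    (Aᴴ * diagonal c * A) j j = ∑ i, c i * (‖A i j‖ : ℂ) ^ 2 := by
  rw [mul_apply]
  simp only [mul_diagonal, conjTranspose_apply]
  refine sum_congr rfl fun i _ => ?_
  rw [Complex.star_def, mul_right_comm, Complex.conj_mul', mul_comm]

lemma mem_doublyStochastic_of_mem_unitaryGroup {A : Matrix ι ι ℂ}
    (hA : A ∈ unitaryGroup ι ℂ) : of (fun i j => ‖A i j‖ ^ 2) ∈ doublyStochastic ℝ ι := by
  refine mem_doublyStochastic_iff_sum.2 ⟨fun i j => sq_nonneg _, fun i => ?_, fun j => ?_⟩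
  · have := congrFun₂ (mem_unitaryGroup_iff.1 hA) i i
    simp only [mul_apply, star_apply, Complex.star_def, Complex.mul_conj', one_apply_eq] at this
    exact_mod_cast this
  · have := congrFun₂ (mem_unitaryGroup_iff'.1 hA) j j
    simp only [mul_apply, star_apply, Complex.star_def, Complex.conj_mul', one_apply_eq] at this
    exact_mod_cast this

lemma sum_rpow_mul_sum_norm_sq_le {p : ℝ} (hp : 1 ≤ p) (X : Matrix ι ι ℂ)
    {U : Matrix ι ι ℂ} (hU : U ∈ unitaryGroup ι ℂ) {b : ι → ℝ} (hb : ∀ j, 0 ≤ b j)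
    (hb1 : ∑ j, b j ^ p ≤ 1) :
    ∑ j, b j ^ (p - 1) * ∑ k, ‖(X * U) k j‖ ^ 2 ≤ schattenNorm (2 * p) X ^ 2 := by
  set hH := isHermitian_conjTranspose_mul_self X
  set A : Matrix ι ι ℂ := star (hH.eigenvectorUnitary : Matrix ι ι ℂ) * U
  have hA : A ∈ unitaryGroup ι ℂ := mul_mem (Unitary.star_mem hH.eigenvectorUnitary.2) hU
  have hconj : (X * U)ᴴ * (X * U) = Aᴴ * diagonal (RCLike.ofReal ∘ hH.eigenvalues) * A := by
    have hspec := hH.spectral_theorem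
    rw [Unitary.conjStarAlgAut_apply] at hspec
    calc (X * U)ᴴ * (X * U) = Uᴴ * (Xᴴ * X) * U := by
          simp only [conjTranspose_mul, Matrix.mul_assoc]
      _ = Aᴴ * diagonal (RCLike.ofReal ∘ hH.eigenvalues) * A := by
          conv_lhs => rw [hspec]
          simp only [A, conjTranspose_mul, star_eq_conjTranspose, conjTranspose_conjTranspose,
            Matrix.mul_assoc]
  have hcol : ∀ j, ∑ k, ‖(X * U) k j‖ ^ 2 = ∑ i, ‖A i j‖ ^ 2 * hH.eigenvalues i := by
    intro j
    have h := conjTranspose_mul_diagonal_mul_apply_self (X * U) (fun _ => 1) j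
    rw [diagonal_one, Matrix.mul_one, hconj, conjTranspose_mul_diagonal_mul_apply_self] at h
    simp only [one_mul, Function.comp_apply, RCLike.ofReal_eq_complex_ofReal] at h
    exact_mod_cast h.symm.trans (sum_congr rfl fun i _ => mul_comm _ _)
  calc ∑ j, b j ^ (p - 1) * ∑ k, ‖(X * U) k j‖ ^ 2
      = ∑ i, ∑ j, of (fun i j => ‖A i j‖ ^ 2) i j * hH.eigenvalues i * b j ^ (p - 1) := by
        simp only [hcol, mul_sum, of_apply]
        rw [sum_comm]
        exact sum_congr rfl fun i _ => sum_congr rfl fun j _ => by ring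
    _ ≤ (∑ i, hH.eigenvalues i ^ p) ^ (1 / p) :=
        sum_mul_mul_rpow_le_of_mem_doublyStochastic (mem_doublyStochastic_of_mem_unitaryGroup hA)
          hp (eigenvalues_conjTranspose_mul_self_nonneg X) hb hb1
    _ = schattenNorm (2 * p) X ^ 2 := (schattenNorm_two_mul_sq (by positivity) X).symm

lemma trace_mul_unitary_conj_diagonal (X Y U : Matrix ι ι ℂ) (c : ι → ℂ) :
    trace (Xᴴ * Y * (U * diagonal c * star U)) =
      ∑ j, ∑ k, c j * (star ((X * U) k j) * (Y * U) k j) := by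
  calc trace (Xᴴ * Y * (U * diagonal c * star U))
      = trace ((X * U)ᴴ * (Y * U) * diagonal c) := by
        rw [← Matrix.mul_assoc, trace_mul_comm]
        simp only [conjTranspose_mul, star_eq_conjTranspose, Matrix.mul_assoc]
    _ = ∑ j, ∑ k, c j * (star ((X * U) k j) * (Y * U) k j) := by
        simp only [trace, diag_apply, mul_diagonal, mul_apply (M := (X * U)ᴴ),
          conjTranspose_apply, sum_mul]
        exact sum_congr rfl fun j _ => sum_congr rfl fun k _ => by ring

-- `‖c j‖ ≤ b j ^ (p - 1)` with `∑ j, b j ^ p ≤ 1` says that `c` lies in the unit ball of the dual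
-- `ℓ^q` norm, `q = p / (p - 1)`; this form also covers `p = 1`, `q = ∞`.
lemma norm_trace_mul_unitary_conj_diagonal_le {p : ℝ} (hp : 1 ≤ p) (X Y : Matrix ι ι ℂ)
    {U : Matrix ι ι ℂ} (hU : U ∈ unitaryGroup ι ℂ) {b : ι → ℝ} (hb : ∀ j, 0 ≤ b j)
    (hb1 : ∑ j, b j ^ p ≤ 1) {c : ι → ℂ} (hc : ∀ j, ‖c j‖ ≤ b j ^ (p - 1)) :
    ‖trace (Xᴴ * Y * (U * diagonal c * star U))‖ ≤
      schattenNorm (2 * p) X * schattenNorm (2 * p) Y := by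
  set w : ι → ℝ := fun j => b j ^ (p - 1)
  have hw : ∀ j, 0 ≤ w j := fun j => Real.rpow_nonneg (hb j) _
  have hsqrt : ∀ j k, w j * (‖(X * U) k j‖ * ‖(Y * U) k j‖) =
      √(w j * ‖(X * U) k j‖ ^ 2) * √(w j * ‖(Y * U) k j‖ ^ 2) := fun j k => by
    rw [← Real.sqrt_mul (by have := hw j; positivity),
      show w j * ‖(X * U) k j‖ ^ 2 * (w j * ‖(Y * U) k j‖ ^ 2) =
        (w j * (‖(X * U) k j‖ * ‖(Y * U) k j‖)) ^ 2 by ring,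
      Real.sqrt_sq (by have := hw j; positivity)]
  calc ‖trace (Xᴴ * Y * (U * diagonal c * star U))‖
      ≤ ∑ j, ∑ k, w j * (‖(X * U) k j‖ * ‖(Y * U) k j‖) := by
        rw [trace_mul_unitary_conj_diagonal]
        refine (norm_sum_le _ _).trans (sum_le_sum fun j _ => (norm_sum_le _ _).trans
          (sum_le_sum fun k _ => ?_))
        rw [norm_mul, norm_mul, norm_star]
        exact mul_le_mul_of_nonneg_right (hc j) (by positivity)
    _ = ∑ x : ι × ι, √(w x.1 * ‖(X * U) x.2 x.1‖ ^ 2) * √(w x.1 * ‖(Y * U) x.2 x.1‖ ^ 2) := by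
        simp only [hsqrt, Fintype.sum_prod_type]
    _ ≤ √(∑ x : ι × ι, w x.1 * ‖(X * U) x.2 x.1‖ ^ 2) *
          √(∑ x : ι × ι, w x.1 * ‖(Y * U) x.2 x.1‖ ^ 2) :=
        Real.sum_sqrt_mul_sqrt_le _ (fun x => by have := hw x.1; positivity)
          (fun x => by have := hw x.1; positivity)
    _ ≤ √(schattenNorm (2 * p) X ^ 2) * √(schattenNorm (2 * p) Y ^ 2) := by
        simp only [Fintype.sum_prod_type, ← mul_sum]
        gcongr
        · exact sum_rpow_mul_sum_norm_sq_le hp X hU hb hb1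
        · exact sum_rpow_mul_sum_norm_sq_le hp Y hU hb hb1
    _ = schattenNorm (2 * p) X * schattenNorm (2 * p) Y := by
        rw [Real.sqrt_sq (schattenNorm_nonneg _ _), Real.sqrt_sq (schattenNorm_nonneg _ _)]

lemma exists_trace_mul_unitary_conj_diagonal_eq_schattenNorm {A : Matrix ι ι ℂ}
    (hA : A.IsHermitian) {p : ℝ} (hp : 1 ≤ p) :
    ∃ U ∈ unitaryGroup ι ℂ, ∃ b : ι → ℝ, ∃ c : ι → ℂ, (∀ j, 0 ≤ b j) ∧ ∑ j, b j ^ p ≤ 1 ∧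
      (∀ j, ‖c j‖ ≤ b j ^ (p - 1)) ∧ trace (A * (U * diagonal c * star U)) = schattenNorm p A := by
  have hp0 : p ≠ 0 := by positivity
  set U : Matrix ι ι ℂ := (hA.eigenvectorUnitary : Matrix ι ι ℂ)
  set μ := hA.eigenvalues
  set t := schattenNorm p A
  refine ⟨U, hA.eigenvectorUnitary.2, ?_⟩
  rcases (show 0 ≤ t from schattenNorm_nonneg p A).eq_or_lt with ht | ht
  · exact ⟨0, 0, fun _ => le_rfl, by simp [Real.zero_rpow hp0],
      fun j => by simpa using Real.rpow_nonneg le_rfl _, by simp [← ht]⟩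
  set b : ι → ℝ := fun j => |μ j| / t
  have htp : t ^ p = ∑ j, |μ j| ^ p := by
    simp only [t, schattenNorm_of_isHermitian hA, one_div,
      Real.rpow_inv_rpow (sum_nonneg fun j _ => Real.rpow_nonneg (abs_nonneg _) _) hp0, μ]
  have hb1 : ∑ j, b j ^ p = 1 := by
    rw [sum_congr rfl fun j _ => Real.div_rpow (abs_nonneg (μ j)) ht.le p, ← sum_div, ← htp]
    exact div_self (Real.rpow_pos_of_pos ht p).ne'
  have hb : ∀ j, 0 ≤ b j := fun j => div_nonneg (abs_nonneg _) ht.le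
  set c : ι → ℂ := fun j => ((SignType.sign (μ j) * b j ^ (p - 1) : ℝ) : ℂ)
  refine ⟨b, c, hb, hb1.le, fun j => ?_, ?_⟩
  · rw [Complex.norm_real, Real.norm_eq_abs, abs_mul, abs_of_nonneg (Real.rpow_nonneg (hb j) _)]
    refine mul_le_of_le_one_left (Real.rpow_nonneg (hb j) _) ?_
    rcases lt_trichotomy (μ j) 0 with h | h | h <;> simp [h]
  have hspec := hA.spectral_theorem
  rw [Unitary.conjStarAlgAut_apply] at hspec
  have hUU : star U * U = 1 := mem_unitaryGroup_iff'.1 hA.eigenvectorUnitary.2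
  have hterm : ∀ j, μ j * SignType.sign (μ j) * b j ^ (p - 1) = t * b j ^ p := fun j => by
    rw [self_mul_sign, show |μ j| = t * b j by simp only [b]; field_simp, mul_assoc,
      ← Real.rpow_one_add' (hb j) (by simpa using hp0), add_sub_cancel]
  calc trace (A * (U * diagonal c * star U))
      = ∑ j, ((μ j * SignType.sign (μ j) * b j ^ (p - 1) : ℝ) : ℂ) := by
        conv_lhs => rw [hspec]
        rw [show U * diagonal (RCLike.ofReal ∘ μ) * star U * (U * diagonal c * star U) =
          U * (diagonal (RCLike.ofReal ∘ μ) * diagonal c) * star U by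
            simp only [Matrix.mul_assoc, ← Matrix.mul_assoc (star U) U, hUU, Matrix.one_mul],
          trace_mul_cycle, hUU, Matrix.one_mul, diagonal_mul_diagonal, trace_diagonal]
        push_cast
        exact sum_congr rfl fun j _ => by simp [c, mul_assoc]
    _ = t := by
        rw [← Complex.ofReal_sum, sum_congr rfl fun j _ => hterm j, ← mul_sum, hb1, mul_one]

theorem approximation_of_squares_general {ι : Type*} [Fintype ι] [DecidableEq ι]
    (O Ot : Matrix ι ι ℂ) (p δ : ℝ) (hp : 1 ≤ p) (hδ1 : δ ≤ 1)
    (h : schattenNorm (2 * p) (O - Ot) ≤ δ * schattenNorm (2 * p) O) :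
    schattenNorm p (Oᴴ * O - Otᴴ * Ot) ≤ 3 * δ * schattenNorm p (Oᴴ * O) := by
  set D := O - Ot
  have hsplit : Oᴴ * O - Otᴴ * Ot = Oᴴ * D + Dᴴ * O - Dᴴ * D := by
    simp only [D, conjTranspose_sub]
    noncomm_ring
  obtain ⟨U, hU, b, c, hb, hb1, hc, htr⟩ := exists_trace_mul_unitary_conj_diagonal_eq_schattenNorm
    ((isHermitian_conjTranspose_mul_self O).sub (isHermitian_conjTranspose_mul_self Ot)) hp
  set C := U * diagonal c * star U
  have holder (X Y : Matrix ι ι ℂ) := norm_trace_mul_unitary_conj_diagonal_le hp X Y hU hb hb1 hc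
  have hO := schattenNorm_nonneg (2 * p) O
  have hD := schattenNorm_nonneg (2 * p) D
  rw [schattenNorm_conjTranspose_mul_self (by positivity)]
  calc schattenNorm p (Oᴴ * O - Otᴴ * Ot)
      = ‖trace (Oᴴ * D * C) + trace (Dᴴ * O * C) - trace (Dᴴ * D * C)‖ := by
        rw [← trace_add, ← trace_sub, ← add_mul, ← sub_mul, ← hsplit, htr, Complex.norm_real,
          Real.norm_of_nonneg (schattenNorm_nonneg _ _)]
    _ ≤ ‖trace (Oᴴ * D * C)‖ + ‖trace (Dᴴ * O * C)‖ + ‖trace (Dᴴ * D * C)‖ :=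
        (norm_sub_le _ _).trans (by gcongr; exact norm_add_le _ _)
    _ ≤ schattenNorm (2 * p) O * schattenNorm (2 * p) D +
          schattenNorm (2 * p) D * schattenNorm (2 * p) O +
          schattenNorm (2 * p) D * schattenNorm (2 * p) D := by
        gcongr <;> apply holder
    _ ≤ 3 * δ * schattenNorm (2 * p) O ^ 2 := by
        nlinarith [mul_le_mul_of_nonneg_left h hO, mul_le_mul_of_nonneg_left h hD,
          mul_le_mul_of_nonneg_right hδ1 (mul_nonneg hO hD)]

/-- **Approximation of squares of operators in Schatten norms** (Lemma 8): if
`‖O − Ot‖_{2p} ≤ δ ‖O‖_{2p}` with `0 ≤ δ ≤ 1`, then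
`‖O†O − Ot†Ot‖_p ≤ 3δ ‖O†O‖_p`. -/
theorem approximation_of_squares {ι : Type*} [Fintype ι] [DecidableEq ι]
    (O Ot : Matrix ι ι ℂ) (p δ : ℝ) (hp : 1 ≤ p) (hδ0 : 0 ≤ δ) (hδ1 : δ ≤ 1)
    (h : schattenNorm (2 * p) (O - Ot) ≤ δ * schattenNorm (2 * p) O) :
    schattenNorm p (Oᴴ * O - Otᴴ * Ot) ≤ 3 * δ * schattenNorm p (Oᴴ * O) :=
  approximation_of_squares_general O Ot p δ hp hδ1 h

end Paper
end

section
/- Binomial expansion of monomial times Chebyshev polynomial: for every commutative ring R in which 2 is invertible, every j ∈ ℕ, and every r ∈ ℤ, the Chebyshev polynomials of the first kind satisfy, in R[X], the identity 2^j · X^j · T_r = ∑_{s=0}^{j} binom(j, s) · T_{r + j − 2s}. -/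
lemma cheb_aux {M : Type*} [CommRing M] (A : ℕ → M) (j : ℕ) :
    ∑ s ∈ Finset.range (j+2), ((j+1).choose s : M) * A s
    = ∑ s ∈ Finset.range (j+1), (j.choose s : M) * A s
      + ∑ s ∈ Finset.range (j+1), (j.choose s : M) * A (s+1) := by
  rw [Finset.sum_range_succ' (fun s => (((j+1).choose s : M)) * A s),
      Finset.sum_range_succ' (fun s => ((j.choose s : M)) * A s)]
  simp only [Nat.choose_succ_succ, Nat.cast_add, add_mul, Finset.sum_add_distrib,
    Nat.choose_zero_right, Nat.cast_one, one_mul]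
  rw [Finset.sum_range_succ (fun s => ((j.choose (s+1) : M)) * A (s+1))]
  simp only [Nat.choose_succ_self, Nat.cast_zero, zero_mul, add_zero]
  ring

/-- **Binomial expansion of a monomial times a Chebyshev polynomial**: in any commutative
ring `R` in which `2` is invertible, for every `j ∈ ℕ` and `r ∈ ℤ`, the Chebyshev
polynomials of the first kind satisfy
`2^j X^j T_r = ∑_{s=0}^{j} binom(j,s) T_{r+j−2s}` in `R[X]`. -/
theorem chebyshev_monomial_binomial_expansion (R : Type*) [CommRing R] [Invertible (2 : R)]
    (j : ℕ) (r : ℤ) :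
    (2 : Polynomial R) ^ j * Polynomial.X ^ j * Polynomial.Chebyshev.T R r =
      ∑ s ∈ Finset.range (j + 1),
        (Nat.choose j s : Polynomial R) *
          Polynomial.Chebyshev.T R (r + (j : ℤ) - 2 * (s : ℤ)) := by
  induction j with
  | zero => simp
  | succ j ih =>
    have key : ∀ k : ℤ, (2 : Polynomial R) * Polynomial.X * Polynomial.Chebyshev.T R k
        = Polynomial.Chebyshev.T R (k+1) + Polynomial.Chebyshev.T R (k-1) := fun k => by
      have h := Polynomial.Chebyshev.T_add_two R (k-1)
      rw [show k - 1 + 2 = k + 1 by ring, show k - 1 + 1 = k by ring] at h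
      linear_combination -h
    have step : (2 : Polynomial R) ^ (j+1) * Polynomial.X ^ (j+1) * Polynomial.Chebyshev.T R r
        = (2 * Polynomial.X) * ((2:Polynomial R)^j * Polynomial.X^j * Polynomial.Chebyshev.T R r) := by
      ring
    rw [step, ih, Finset.mul_sum]
    have hsum : ∀ s ∈ Finset.range (j+1),
        (2 * Polynomial.X) * ((Nat.choose j s : Polynomial R) * Polynomial.Chebyshev.T R (r + (j:ℤ) - 2*(s:ℤ)))
        = (Nat.choose j s : Polynomial R) * Polynomial.Chebyshev.T R (r + ((j:ℤ)+1) - 2*(s:ℤ))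
          + (Nat.choose j s : Polynomial R) * Polynomial.Chebyshev.T R (r + ((j:ℤ)+1) - 2*((s:ℤ)+1)) := by
      intro s _
      have h := key (r + (j:ℤ) - 2*(s:ℤ))
      rw [show r + (j:ℤ) - 2*(s:ℤ) + 1 = r + ((j:ℤ)+1) - 2*(s:ℤ) by ring,
          show r + (j:ℤ) - 2*(s:ℤ) - 1 = r + ((j:ℤ)+1) - 2*((s:ℤ)+1) by ring] at h
      linear_combination (Nat.choose j s : Polynomial R) * h
    rw [Finset.sum_congr rfl hsum, Finset.sum_add_distrib]
    have h2 := cheb_aux (fun s : ℕ => Polynomial.Chebyshev.T R (r + ((j:ℤ)+1) - 2*(s:ℤ))) j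
    push_cast at h2 ⊢
    exact h2.symm
end

section
/- Imaginary-time conjugation bound for local operators: let H = ∑_X h_X be a Hamiltonian on n qudits in which every term h_X is Hermitian and supported on a set X of at most k sites, with max_i ∑_{X∋i} ‖h_X‖ ≤ g. Then for every operator O_S supported on a set S of sites and every β ≥ 0 with 2gkβ < 1, one has ‖e^{−βH} O_S e^{βH}‖ ≤ ‖O_S‖ · (1 − 2gkβ)^{−|S|/k}. -/
/-!
Expanding the conjugation as an exponential series, `e^{-βH} O e^{βH} = ∑ₘ (-β)^m / m! · ad_H^m O`.
A commutator with `H` only sees the terms `h_X` that meet the current support `T`; their norms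
add up to at most `g |T|`, and each of them enlarges the support by at most `k` sites. Hence
`‖ad_H^m O‖ ≤ ‖O‖ ∏_{j<m} 2g(|S| + jk)`, and with `a = |S|/k`, `x = 2gkβ` the resulting majorant
`∑ₘ multichoose(a, m) xᵐ` is the binomial series of `(1 - x)^{-a}`.
-/

open scoped BigOperators

namespace Paper

variable {ι : Type*} [Fintype ι] [DecidableEq ι] {d : ℕ}

open scoped Nat

open Classical in
theorem SupportedOn.sub {X : Set ι} {A B : Op ι d} (hA : SupportedOn X A) (hB : SupportedOn X B) :
    SupportedOn X (A - B) := by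
  obtain ⟨A', hA'⟩ := hA
  obtain ⟨B', hB'⟩ := hB
  refine ⟨A' - B', fun i j => ?_⟩
  simp only [Matrix.sub_apply, hA', hB']
  split_ifs <;> simp

open Classical in
theorem SupportedOn.mono {X Y : Set ι} {A : Op ι d} (hA : SupportedOn X A) (hXY : X ⊆ Y) :
    SupportedOn Y A := by
  obtain ⟨B, hB⟩ := hA
  refine ⟨Matrix.of fun a b => if ∀ y : Y, y.1 ∉ X → a y = b y then
    B (fun x => a ⟨x, hXY x.2⟩) (fun x => b ⟨x, hXY x.2⟩) else 0, fun i j => ?_⟩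
  rw [hB]
  by_cases hij : ∀ x ∉ Y, i x = j x
  · have : (∀ x ∉ X, i x = j x) ↔ ∀ y : Y, y.1 ∉ X → i y = j y :=
      ⟨fun h y hy => h y hy, fun h x hx => if hxY : x ∈ Y then h ⟨x, hxY⟩ hx else hij x hxY⟩
    simp only [this, if_pos hij, Matrix.of_apply]
  · rw [if_neg hij, if_neg fun h => hij fun x hx => h x fun hxX => hx (hXY hxX)]

open Classical in
theorem SupportedOn.mul {X : Set ι} {A B : Op ι d} (hA : SupportedOn X A) (hB : SupportedOn X B) :
    SupportedOn X (A * B) := by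
  obtain ⟨A', hA'⟩ := hA
  obtain ⟨B', hB'⟩ := hB
  refine ⟨A' * B', fun i j => ?_⟩
  by_cases hij : ∀ x ∉ X, i x = j x
  · let glue : (X → Fin d) → ι → Fin d := fun b x => if h : x ∈ X then b ⟨x, h⟩ else i x
    have glue_inj : Function.Injective glue := fun b b' hbb' => funext fun x => by
      simpa [glue, x.2] using congrFun hbb' x.1
    rw [if_pos hij, Matrix.mul_apply, Matrix.mul_apply]
    refine (Fintype.sum_of_injective glue glue_inj _ _ (fun v hv => ?_) fun b => ?_).symm
    · rw [hA', if_neg, zero_mul]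
      refine fun hiv => hv ⟨fun x => v x, funext fun x => ?_⟩
      by_cases hx : x ∈ X
      · simp [glue, hx]
      · simp [glue, hx, hiv x hx]
    · rw [hA', hB', if_pos fun x hx => by simp [glue, hx],
        if_pos fun x hx => by simp [glue, hx, hij x hx]]
      simp [glue]
  · rw [if_neg hij, Matrix.mul_apply]
    refine Finset.sum_eq_zero fun v _ => ?_
    rw [hA', hB']
    split_ifs with h₁ h₂
    · exact absurd (fun x hx => (h₁ x hx).trans (h₂ x hx)) hij
    all_goals simp

open Classical in
theorem mul_apply_of_disjoint {X Y : Set ι} (hXY : Disjoint X Y) {A B : Op ι d}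
    {A' : Matrix (X → Fin d) (X → Fin d) ℂ} {B' : Matrix (Y → Fin d) (Y → Fin d) ℂ}
    (hA : ∀ i j, A i j = if ∀ x ∉ X, i x = j x then A' (fun x => i x) (fun x => j x) else 0)
    (hB : ∀ i j, B i j = if ∀ x ∉ Y, i x = j x then B' (fun x => i x) (fun x => j x) else 0)
    (u w : ι → Fin d) :
    (A * B) u w = if ∀ x ∉ X ∪ Y, u x = w x then
      A' (fun x => u x) (fun x => w x) * B' (fun x => u x) (fun x => w x) else 0 := by
  have hYX : ∀ x ∈ Y, x ∉ X := fun x hY hX => Set.disjoint_left.1 hXY hX hY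
  rw [Matrix.mul_apply, Fintype.sum_eq_single (X.piecewise w u)]
  · rw [hA, if_pos fun x hx => by simp [hx], hB]
    simp only [Set.piecewise_eq_of_mem _ _ _ (Subtype.prop _), Set.mem_union, not_or]
    by_cases h : ∀ x, x ∉ X ∧ x ∉ Y → u x = w x
    · rw [if_pos h, if_pos fun x hx => ?_]
      · congr 2
        funext y
        simp [hYX y y.2]
      · by_cases hxX : x ∈ X
        · simp [hxX]
        · simpa [hxX] using h x ⟨hxX, hx⟩
    · rw [if_neg h, if_neg fun h' => h fun x hx => ?_, mul_zero]
      simpa [hx.1] using h' x hx.2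
  · intro v hv
    rw [hA, hB]
    split_ifs with h₁ h₂
    · refine absurd (funext fun x => ?_) hv
      by_cases hx : x ∈ X
      · simp [hx, h₂ x (Set.disjoint_left.1 hXY hx)]
      · simp [hx, h₁ x hx]
    all_goals simp

open Classical in
theorem SupportedOn.commute_of_disjoint {X Y : Set ι} {A B : Op ι d} (hA : SupportedOn X A)
    (hB : SupportedOn Y B) (hXY : Disjoint X Y) : Commute A B := by
  obtain ⟨A', hA'⟩ := hA
  obtain ⟨B', hB'⟩ := hB
  ext u w
  rw [mul_apply_of_disjoint hXY hA' hB', mul_apply_of_disjoint hXY.symm hB' hA']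
  simp only [Set.union_comm Y X, mul_comm (B' _ _)]

theorem SupportedOn.mul_sub_mul {X Y : Set ι} {A B : Op ι d} (hA : SupportedOn X A)
    (hB : SupportedOn Y B) : SupportedOn (X ∪ Y) (A * B - B * A) := by
  have hA' := hA.mono (Set.subset_union_left (t := Y))
  have hB' := hB.mono (Set.subset_union_right (s := X))
  exact (hA'.mul hB').sub (hB'.mul hA')

section Conjugation

open NormedSpace ContinuousLinearMap

variable (𝕜 : Type*) [RCLike 𝕜] {A : Type*} [NormedRing A] [NormedAlgebra 𝕜 A]

noncomputable def adCLM (a : A) : A →L[𝕜] A := mul 𝕜 A a - (mul 𝕜 A).flip a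

variable {𝕜}

@[simp]
theorem adCLM_apply (a b : A) : adCLM 𝕜 a b = a * b - b * a := rfl

theorem mul_pow_apply (a b : A) (n : ℕ) : (mul 𝕜 A a ^ n) b = a ^ n * b := by
  induction n with
  | zero => simp
  | succ n ih => rw [pow_succ', mul_apply_eq_comp, ih, mul_apply', pow_succ', mul_assoc]

theorem mul_flip_pow_apply (a b : A) (n : ℕ) : ((mul 𝕜 A).flip a ^ n) b = b * a ^ n := by
  induction n with
  | zero => simp
  | succ n ih => rw [pow_succ', mul_apply_eq_comp, ih, flip_apply, mul_apply', pow_succ, mul_assoc]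

theorem adCLM_smul_pow_apply (t : 𝕜) (a b : A) (m : ℕ) :
    (adCLM 𝕜 (t • a) ^ m) b = t ^ m • (adCLM 𝕜 a ^ m) b := by
  induction m with
  | zero => simp
  | succ m ih =>
    have hsmul : adCLM 𝕜 (t • a) = t • adCLM 𝕜 a := by ext; simp [smul_sub]
    rw [pow_succ' (adCLM 𝕜 (t • a)), mul_apply_eq_comp, ih, hsmul, smul_apply, map_smul, smul_smul,
      pow_succ' (adCLM 𝕜 a), mul_apply_eq_comp, pow_succ']

variable [CompleteSpace A]

theorem exp_mul_apply (a b : A) : exp (mul 𝕜 A a) b = exp a * b := by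
  refine ((exp_series_hasSum_exp' (𝕂 := 𝕜) (mul 𝕜 A a)).mapL (apply 𝕜 A b)).unique ?_
  simpa only [apply_apply, smul_apply, mul_pow_apply, smul_mul_assoc] using
    (exp_series_hasSum_exp' (𝕂 := 𝕜) a).mul_right b

theorem exp_mul_flip_apply (a b : A) : exp ((mul 𝕜 A).flip a) b = b * exp a := by
  refine ((exp_series_hasSum_exp' (𝕂 := 𝕜) ((mul 𝕜 A).flip a)).mapL (apply 𝕜 A b)).unique ?_
  simpa only [apply_apply, smul_apply, mul_flip_pow_apply, mul_smul_comm] using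
    (exp_series_hasSum_exp' (𝕂 := 𝕜) a).mul_left b

theorem exp_adCLM_apply (a b : A) : exp (adCLM 𝕜 a) b = exp a * b * exp (-a) := by
  let _ : NormedAlgebra ℚ (A →L[𝕜] A) := .restrictScalars ℚ 𝕜 _
  have hcomm : Commute (mul 𝕜 A a) (-(mul 𝕜 A).flip a) :=
    Commute.neg_right <| ContinuousLinearMap.ext fun x => by simp [mul_assoc]
  rw [adCLM, sub_eq_add_neg, exp_add_of_commute hcomm, mul_apply_eq_comp, ← map_neg,
    exp_mul_flip_apply, exp_mul_apply, mul_assoc]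

theorem exp_conj_eq_self_of_commute {a b : A} (hab : Commute a b) (t : 𝕜) :
    exp ((-t) • a) * b * exp (t • a) = b := by
  let _ : NormedAlgebra ℚ A := .restrictScalars ℚ 𝕜 A
  rw [neg_smul]
  exact (hab.symm.smul_right t).exp_neg_mul_mul_exp_eq_self

theorem hasSum_exp_conj (t : 𝕜) (a b : A) :
    HasSum (fun m => ((m !⁻¹ : 𝕜) * (-t) ^ m) • (adCLM 𝕜 a ^ m) b)
      (exp ((-t) • a) * b * exp (t • a)) := by
  have hconj := exp_adCLM_apply (𝕜 := 𝕜) ((-t) • a) b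
  rw [← neg_smul, neg_neg] at hconj
  rw [← hconj]
  simpa only [apply_apply, smul_apply, adCLM_smul_pow_apply, mul_smul] using
    (exp_series_hasSum_exp' (𝕂 := 𝕜) (adCLM 𝕜 ((-t) • a))).mapL (apply 𝕜 A b)

theorem norm_exp_conj_le {t : 𝕜} {a b : A} {c : ℕ → ℝ} {s : ℝ}
    (hc : ∀ m, ‖(adCLM 𝕜 a ^ m) b‖ ≤ c m) (hs : HasSum (fun m => ‖t‖ ^ m / m ! * c m) s) :
    ‖exp ((-t) • a) * b * exp (t • a)‖ ≤ s := by
  refine (hasSum_exp_conj t a b).norm_le_of_bounded hs fun m => ?_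
  rw [norm_smul, norm_mul, norm_inv, norm_pow, norm_neg, RCLike.norm_natCast, div_eq_inv_mul]
  exact mul_le_mul_of_nonneg_left (hc m) (by positivity)

end Conjugation

theorem factorial_mul_multichoose (a : ℝ) (m : ℕ) :
    m ! * Ring.multichoose a m = ∏ j ∈ Finset.range m, (a + j) := by
  rw [← nsmul_eq_mul, Ring.factorial_nsmul_multichoose_eq_ascPochhammer,
    Polynomial.ascPochhammer_smeval_eq_eval]
  induction m with
  | zero => simp
  | succ m ih => rw [ascPochhammer_succ_eval, ih, Finset.prod_range_succ]

theorem hasSum_multichoose_mul_pow (a : ℝ) {x : ℝ} (hx : |x| < 1) :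
    HasSum (fun m => Ring.multichoose a m * x ^ m) ((1 - x) ^ (-a)) := by
  have := (Real.one_div_one_sub_rpow_hasFPowerSeriesOnBall_zero a).hasSum
    (y := x) (by rw [Metric.mem_eball, edist_zero_right, enorm_eq_nnnorm, ENNReal.coe_lt_one_iff,
      ← NNReal.coe_lt_coe, coe_nnnorm, Real.norm_eq_abs]; exact hx)
  simp only [FormalMultilinearSeries.ofScalars_apply_eq, smul_eq_mul, zero_add] at this
  rw [Real.rpow_neg (by linarith [le_abs_self x]), ← one_div]
  simpa only [Ring.multichoose_eq] using this

theorem cast_prod_add_mul (s k m : ℕ) (hk : k ≠ 0) :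
    ((∏ j ∈ Finset.range m, (s + j * k) : ℕ) : ℝ) =
      k ^ m * m ! * Ring.multichoose (s / k : ℝ) m := by
  have hfactor : ∀ j : ℕ, ((s + j * k : ℕ) : ℝ) = k * (s / k + j) := fun j => by
    push_cast
    field_simp
  simp_rw [mul_assoc, factorial_mul_multichoose, Nat.cast_prod, hfactor, Finset.prod_mul_distrib,
    Finset.prod_const, Finset.card_range]

section Locality

open Finset
open scoped Matrix.Norms.L2Operator

theorem opNorm_eq_norm (A : Op ι d) : opNorm A = ‖A‖ := rfl

theorem sum_filter_inter_nonempty_le {w : Finset ι → ℝ} (hw : ∀ X, 0 ≤ w X) (T : Finset ι) :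
    ∑ X with (X ∩ T).Nonempty, w X ≤ ∑ i ∈ T, ∑ X with i ∈ X, w X :=
  calc ∑ X with (X ∩ T).Nonempty, w X
      ≤ ∑ X with (X ∩ T).Nonempty, #(X ∩ T) * w X :=
        sum_le_sum fun X hX => le_mul_of_one_le_left (hw X) (by
          exact_mod_cast (mem_filter.1 hX).2.card_pos)
    _ ≤ ∑ X, #(X ∩ T) * w X :=
        sum_le_sum_of_subset_of_nonneg (filter_subset _ _) fun X _ _ => by
          have := hw X
          positivity
    _ = ∑ i ∈ T, ∑ X with i ∈ X, w X := by
        simp_rw [sum_filter, inter_comm _ T, ← filter_mem_eq_inter, card_filter, Nat.cast_sum,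
          Nat.cast_ite, Nat.cast_one, Nat.cast_zero, sum_mul, ite_mul, one_mul, zero_mul]
        exact sum_comm

theorem adCLM_sum_apply_of_supportedOn {h : Finset ι → Op ι d}
    (hsupp : ∀ X : Finset ι, SupportedOn (X : Set ι) (h X)) {T : Finset ι} {A : Op ι d}
    (hA : SupportedOn (T : Set ι) A) :
    adCLM ℂ (∑ X, h X) A = ∑ X with (X ∩ T).Nonempty, (h X * A - A * h X) := by
  rw [adCLM_apply, sum_mul, mul_sum, ← sum_sub_distrib, sum_filter]
  refine sum_congr rfl fun X _ => ?_
  split_ifs with hXT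
  · rfl
  · rw [sub_eq_zero]
    refine ((hsupp X).commute_of_disjoint hA ?_).eq
    rwa [disjoint_coe, disjoint_iff_inter_eq_empty, ← not_nonempty_iff_eq_empty]

theorem norm_adCLM_pow_apply_le {h : Finset ι → Op ι d} {g : ℝ} {k : ℕ}
    (hsupp : ∀ X : Finset ι, SupportedOn (X : Set ι) (h X)) (hcard : ∀ X, h X ≠ 0 → #X ≤ k)
    (hg : ∀ i, ∑ X with i ∈ X, ‖h X‖ ≤ g) (hg0 : 0 ≤ g) (m : ℕ) {T : Finset ι} {A : Op ι d}
    (hA : SupportedOn (T : Set ι) A) :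
    ‖(adCLM ℂ (∑ X, h X) ^ m) A‖ ≤ ‖A‖ * (2 * g) ^ m * ∏ j ∈ range m, (#T + j * k) := by
  induction m generalizing T A with
  | zero => simp
  | succ m ih =>
    -- bounds `ad^m` on operators supported on `X ∪ T`, as `#(X ∪ T) ≤ #T + k`
    set C : ℝ := (2 * g) ^ m * ∏ j ∈ range m, (#T + (j + 1) * k) with hC
    have hterm : ∀ X, ‖(adCLM ℂ (∑ X, h X) ^ m) (h X * A - A * h X)‖ ≤ 2 * ‖h X‖ * ‖A‖ * C := by
      intro X
      by_cases hX : h X = 0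
      · simp [hX]
      have hprod : ∏ j ∈ range m, (#(X ∪ T) + j * k) ≤ ∏ j ∈ range m, (#T + (j + 1) * k) :=
        prod_le_prod' fun j _ => by
          have := (card_union_le X T).trans (Nat.add_le_add_right (hcard X hX) _)
          rw [add_mul, one_mul]
          omega
      calc _ ≤ ‖h X * A - A * h X‖ * (2 * g) ^ m * ∏ j ∈ range m, (#(X ∪ T) + j * k) :=
            ih (by simpa only [coe_union] using (hsupp X).mul_sub_mul hA)
        _ ≤ 2 * ‖h X‖ * ‖A‖ * C := by
          rw [mul_assoc, hC]
          gcongr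
          calc ‖h X * A - A * h X‖ ≤ ‖h X‖ * ‖A‖ + ‖A‖ * ‖h X‖ :=
                (norm_sub_le _ _).trans (add_le_add (norm_mul_le _ _) (norm_mul_le _ _))
            _ = 2 * ‖h X‖ * ‖A‖ := by ring
    have hweights : ∑ X with (X ∩ T).Nonempty, ‖h X‖ ≤ #T * g := by
      rw [← nsmul_eq_mul]
      exact (sum_filter_inter_nonempty_le (fun X => norm_nonneg (h X)) T).trans
        (sum_le_card_nsmul _ _ _ fun i _ => hg i)
    rw [pow_succ (adCLM ℂ _), mul_apply_eq_comp, adCLM_sum_apply_of_supportedOn hsupp hA, map_sum]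
    calc _ ≤ ∑ X with (X ∩ T).Nonempty, 2 * ‖h X‖ * ‖A‖ * C :=
          (norm_sum_le _ _).trans (sum_le_sum fun X _ => hterm X)
      _ = 2 * ‖A‖ * C * ∑ X with (X ∩ T).Nonempty, ‖h X‖ := by
          rw [mul_sum]
          exact sum_congr rfl fun X _ => by ring
      _ ≤ 2 * ‖A‖ * C * (#T * g) := by
          gcongr
      _ = ‖A‖ * (2 * g) ^ (m + 1) * ∏ j ∈ range (m + 1), (#T + j * k) := by
          rw [prod_range_succ', hC]
          push_cast
          ring

end Locality

open Finset in
open scoped Matrix.Norms.L2Operator in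
theorem imaginary_time_conjugation_bound_general (n d k : ℕ) (g : ℝ)
    (h : Finset (Fin n) → Op (Fin n) d)
    (hsupp : ∀ X : Finset (Fin n), SupportedOn (X : Set (Fin n)) (h X))
    (hcard : ∀ X : Finset (Fin n), h X ≠ 0 → X.card ≤ k)
    (hg : ∀ i : Fin n,
      ∑ X ∈ Finset.univ.filter (fun X : Finset (Fin n) => i ∈ X), opNorm (h X) ≤ g)
    (S : Finset (Fin n)) (O : Op (Fin n) d) (hO : SupportedOn (S : Set (Fin n)) O)
    (β : ℝ) (hβ : 0 ≤ β) (hsmall : 2 * g * k * β < 1) :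
    opNorm (mexp ((-(β : ℂ)) • ∑ X : Finset (Fin n), h X) * O *
        mexp ((β : ℂ) • ∑ X : Finset (Fin n), h X))
      ≤ opNorm O * (1 - 2 * g * k * β) ^ (-(S.card : ℝ) / k) := by
  simp only [opNorm_eq_norm, mexp] at hg ⊢
  -- then every nonzero `h X` sits on `∅`, and the exponent is `0` (division by `k = 0`, or `S = ∅`)
  by_cases htriv : k = 0 ∨ n = 0
  · have hcomm : Commute O (∑ X, h X) := Commute.sum_right _ _ _ fun X _ => by
      by_cases hX : h X = 0
      · simp [hX]
      have hXempty : X = ∅ := by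
        rcases htriv with rfl | rfl
        · exact card_eq_zero.1 (Nat.le_zero.1 (hcard X hX))
        · exact Subsingleton.elim X ∅
      exact hO.commute_of_disjoint (hsupp X) (by simp [hXempty])
    have hexponent : -(#S : ℝ) / k = 0 := by
      rcases htriv with rfl | rfl
      · simp
      · simp [Subsingleton.elim S ∅]
    rw [exp_conj_eq_self_of_commute hcomm.symm, hexponent, Real.rpow_zero, mul_one]
  obtain ⟨hk, hn⟩ : k ≠ 0 ∧ n ≠ 0 := not_or.1 htriv
  have hg0 : 0 ≤ g := (sum_nonneg fun X _ => norm_nonneg (h X)).trans (hg ⟨0, by omega⟩)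
  have hx : |2 * g * k * β| < 1 := by rw [abs_of_nonneg (by positivity)]; exact hsmall
  have hseries := (hasSum_multichoose_mul_pow (#S / k : ℝ) hx).mul_left ‖O‖
  rw [neg_div]
  refine norm_exp_conj_le (fun m => norm_adCLM_pow_apply_le hsupp hcard hg hg0 m hO)
    (hseries.congr_fun fun m => ?_)
  rw [cast_prod_add_mul _ _ _ hk, Complex.norm_real, Real.norm_of_nonneg hβ]
  field_simp
  ring

/-- **Imaginary-time conjugation bound for local operators**: let `H = ∑_X h_X` be a
Hamiltonian on `n` qudits whose Hermitian terms are each supported on at most `k` sites,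
with `max_i ∑_{X∋i} ‖h_X‖ ≤ g`.  Then for every operator `O_S` supported on `S` and every
`β ≥ 0` with `2gkβ < 1`,
`‖e^{−βH} O_S e^{βH}‖ ≤ ‖O_S‖ (1 − 2gkβ)^{−|S|/k}`. -/
theorem imaginary_time_conjugation_bound (n d k : ℕ) (g : ℝ)
    (h : Finset (Fin n) → Op (Fin n) d)
    (hsupp : ∀ X : Finset (Fin n), SupportedOn (X : Set (Fin n)) (h X))
    (hherm : ∀ X : Finset (Fin n), (h X).IsHermitian)
    (hcard : ∀ X : Finset (Fin n), h X ≠ 0 → X.card ≤ k)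
    (hg : ∀ i : Fin n,
      ∑ X ∈ Finset.univ.filter (fun X : Finset (Fin n) => i ∈ X), opNorm (h X) ≤ g)
    (S : Finset (Fin n)) (O : Op (Fin n) d) (hO : SupportedOn (S : Set (Fin n)) O)
    (β : ℝ) (hβ : 0 ≤ β) (hsmall : 2 * g * k * β < 1) :
    opNorm (mexp ((-(β : ℂ)) • ∑ X : Finset (Fin n), h X) * O *
        mexp ((β : ℂ) • ∑ X : Finset (Fin n), h X))
      ≤ opNorm O * (1 - 2 * g * k * β) ^ (-(S.card : ℝ) / k) :=
  imaginary_time_conjugation_bound_general n d k g h hsupp hcard hg S O hO β hβ hsmall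

end Paper
end

section
/- Norm bound for multi-commutators of local operators (Lemma 11): let A_1, …, A_M be operators on n qudits with A_s = ∑_X a_{s,X}, where each a_{s,X} is supported on a set X of at most k_s sites and max_i ∑_{X∋i} ‖a_{s,X}‖ ≤ g_s. Then for every operator O supported on a set X₀ of sites, ‖ad_{A_M} ad_{A_{M−1}} ⋯ ad_{A_1}(O)‖ ≤ ( ∏_{m=1}^{M} 2 g_m K_m ) · ‖O‖, where K_m = |X₀| + ∑_{s=1}^{m−1} k_s. -/
/-!
Expand every `A_s = ∑_X a_{s,X}` and keep the nested commutator as a sum of pieces indexed by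
their supports. A piece `b` supported on `Y` commutes with every `a_X` with `X` disjoint from `Y`;
the remaining terms have total norm at most `g_s` per site of `Y`, so taking the commutator with
`A_s` multiplies the total norm of the pieces by at most `2 g_s |Y|`, while each new piece
`[a_X, b]` is supported on `X ∪ Y`, with at most `k_s` more sites. Starting from the single piece
`O` on `X₀`, the supports after `m` steps have at most `K_m` sites.
-/

open scoped BigOperators

namespace Paper

variable {ι : Type*} [Fintype ι] [DecidableEq ι] {d : ℕ}

open Finset
open scoped Matrix.Norms.L2Operator

/-- Entrywise form of `SupportedOn`: `A` does not change the configuration outside `X`, and its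
matrix elements are invariant under relabelling the local states of the sites outside `X`. -/
structure IsLocalOn (X : Finset ι) (A : Op ι d) : Prop where
  apply_eq_zero : ∀ {i j : ι → Fin d} {x : ι}, x ∉ X → i x ≠ j x → A i j = 0
  submatrix_piCongrRight : ∀ τ : ι → Equiv.Perm (Fin d), (∀ x ∈ X, τ x = 1) →
    A.submatrix (Equiv.piCongrRight τ) (Equiv.piCongrRight τ) = A

theorem SupportedOn.isLocalOn {X : Finset ι} {A : Op ι d} (h : SupportedOn (X : Set ι) A) :
    IsLocalOn X A := by
  obtain ⟨B, hB⟩ := h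
  refine ⟨fun {i j x} hx hij => ?_, fun τ hτ => ?_⟩
  · rw [hB, if_neg]
    exact fun h => hij (h x (by simpa using hx))
  · ext i j
    simp only [Matrix.submatrix_apply, Equiv.piCongrRight_apply, hB, mem_coe,
      Pi.map_apply, Equiv.apply_eq_iff_eq]
    congr 2 <;> funext x <;> simp [hτ x x.2]

namespace IsLocalOn

variable {J : Type*} {X Y : Finset ι} {A B : Op ι d}

theorem zero : IsLocalOn X (0 : Op ι d) :=
  ⟨fun _ _ => rfl, fun _ _ => rfl⟩

theorem add (hA : IsLocalOn X A) (hB : IsLocalOn X B) : IsLocalOn X (A + B) :=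
  ⟨fun hx hij => by simp [hA.apply_eq_zero hx hij, hB.apply_eq_zero hx hij],
    fun τ hτ => congrArg₂ (· + ·) (hA.2 τ hτ) (hB.2 τ hτ)⟩

theorem sub (hA : IsLocalOn X A) (hB : IsLocalOn X B) : IsLocalOn X (A - B) :=
  ⟨fun hx hij => by simp [hA.apply_eq_zero hx hij, hB.apply_eq_zero hx hij],
    fun τ hτ => congrArg₂ (· - ·) (hA.2 τ hτ) (hB.2 τ hτ)⟩

theorem sum {s : Finset J} {f : J → Op ι d} (h : ∀ j ∈ s, IsLocalOn X (f j)) :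
    IsLocalOn X (∑ j ∈ s, f j) :=
  sum_induction f (IsLocalOn X) (fun _ _ => add) zero h

theorem mul_apply_eq_zero (hA : IsLocalOn X A) (hB : IsLocalOn Y B) {i j : ι → Fin d} {x : ι}
    (hxX : x ∉ X) (hxY : x ∉ Y) (hij : i x ≠ j x) : (A * B) i j = 0 := by
  refine (Matrix.mul_apply ..).trans <| sum_eq_zero fun k _ => ?_
  by_cases hik : i x = k x
  · rw [hB.apply_eq_zero hxY (hik ▸ hij), mul_zero]
  · rw [hA.apply_eq_zero hxX hik, zero_mul]

theorem mul (hA : IsLocalOn X A) (hB : IsLocalOn Y B) : IsLocalOn (X ∪ Y) (A * B) := by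
  refine ⟨fun hx hij => ?_, fun τ hτ => ?_⟩
  · rw [mem_union, not_or] at hx
    exact mul_apply_eq_zero hA hB hx.1 hx.2 hij
  · rw [← Matrix.submatrix_mul_equiv _ _ _ (Equiv.piCongrRight τ),
      hA.2 τ fun x hx => hτ x (mem_union_left _ hx), hB.2 τ fun x hx => hτ x (mem_union_right _ hx)]

theorem mul_apply_of_disjoint (hA : IsLocalOn X A) (hB : IsLocalOn Y B) (hXY : Disjoint X Y)
    (i j : ι → Fin d) : (A * B) i j = A i (X.piecewise j i) * B (X.piecewise j i) j := by
  refine (Matrix.mul_apply ..).trans <| sum_eq_single_of_mem _ (mem_univ _) fun k _ hk => ?_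
  obtain ⟨x, hx⟩ := Function.ne_iff.mp hk
  by_cases hxX : x ∈ X
  · rw [piecewise_eq_of_mem _ _ _ hxX] at hx
    rw [hB.apply_eq_zero (disjoint_left.mp hXY hxX) hx, mul_zero]
  · rw [piecewise_eq_of_notMem _ _ _ hxX] at hx
    rw [hA.apply_eq_zero hxX (Ne.symm hx), zero_mul]

theorem apply_piecewise (hA : IsLocalOn X A) (hXY : Disjoint X Y) {i j : ι → Fin d}
    (hij : ∀ x ∉ X ∪ Y, i x = j x) : A i (X.piecewise j i) = A (Y.piecewise j i) j := by
  let τ : ι → Equiv.Perm (Fin d) := fun x => if x ∈ X then 1 else Equiv.swap (i x) (j x)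
  have key := congrFun₂ (hA.2 τ fun x hx => if_pos hx) i (X.piecewise j i)
  simp only [Matrix.submatrix_apply] at key
  rw [← key]
  congr 1 <;> funext x <;> by_cases hxX : x ∈ X <;> by_cases hxY : x ∈ Y <;>
    simp_all [τ, disjoint_left]

theorem commute_of_disjoint (hA : IsLocalOn X A) (hB : IsLocalOn Y B) (hXY : Disjoint X Y) :
    Commute A B := by
  ext i j
  by_cases hij : ∀ x ∉ X ∪ Y, i x = j x
  · rw [mul_apply_of_disjoint hA hB hXY, mul_apply_of_disjoint hB hA hXY.symm,
      hA.apply_piecewise hXY hij, hB.apply_piecewise hXY.symm (by rwa [union_comm]), mul_comm]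
  · push Not at hij
    obtain ⟨x, hx, hne⟩ := hij
    rw [mem_union, not_or] at hx
    rw [mul_apply_eq_zero hA hB hx.1 hx.2 hne, mul_apply_eq_zero hB hA hx.2 hx.1 hne]

end IsLocalOn

theorem opNorm_eq_norm_s19 {m : Type*} [Fintype m] [DecidableEq m] (A : Matrix m m ℂ) :
    opNorm A = ‖A‖ := rfl

theorem norm_commutator_le {R : Type*} [NonUnitalSeminormedRing R] (a b : R) :
    ‖a * b - b * a‖ ≤ 2 * ‖a‖ * ‖b‖ :=
  calc ‖a * b - b * a‖ ≤ ‖a‖ * ‖b‖ + ‖b‖ * ‖a‖ :=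
        (norm_sub_le _ _).trans (add_le_add (norm_mul_le a b) (norm_mul_le b a))
    _ = 2 * ‖a‖ * ‖b‖ := by ring

theorem sum_filter_not_disjoint_le {f : Finset ι → ℝ} (hf : ∀ X, 0 ≤ f X) (Y : Finset ι) :
    ∑ X with ¬Disjoint X Y, f X ≤ ∑ i ∈ Y, ∑ X with i ∈ X, f X := by
  calc ∑ X with ¬Disjoint X Y, f X ≤ ∑ X, ∑ i ∈ Y, if i ∈ X then f X else 0 := by
        rw [sum_filter]
        refine sum_le_sum fun X _ => ?_
        have hnonneg : ∀ i ∈ Y, 0 ≤ if i ∈ X then f X else 0 :=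
          fun _ _ => ite_nonneg (hf X) le_rfl
        by_cases hXY : Disjoint X Y
        · simpa [hXY] using sum_nonneg hnonneg
        · obtain ⟨i, hiX, hiY⟩ := not_disjoint_iff.mp hXY
          simpa [hXY, hiX] using single_le_sum hnonneg hiY
    _ = ∑ i ∈ Y, ∑ X with i ∈ X, f X := by
        rw [sum_comm]
        simp only [sum_filter]

def commutatorFamily (a b : Finset ι → Op ι d) (Z : Finset ι) : Op ι d :=
  ∑ p : Finset ι × Finset ι with p.1 ∪ p.2 = Z, (a p.1 * b p.2 - b p.2 * a p.1)

def IsLocalFamily (K : ℕ) (b : Finset ι → Op ι d) : Prop :=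
  ∀ X, IsLocalOn X (b X) ∧ (b X ≠ 0 → X.card ≤ K)

section CommutatorFamily

variable {a b : Finset ι → Op ι d}

theorem sum_commutatorFamily :
    ∑ Z, commutatorFamily a b Z = (∑ X, a X) * (∑ Y, b Y) - (∑ Y, b Y) * ∑ X, a X := by
  unfold commutatorFamily
  rw [sum_fiberwise univ (fun p : Finset ι × Finset ι => p.1 ∪ p.2)
      (fun p => a p.1 * b p.2 - b p.2 * a p.1), sum_sub_distrib, Fintype.sum_prod_type,
    Fintype.sum_prod_type, sum_mul_sum, sum_mul_sum, sum_comm (f := fun x y => b y * a x)]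

theorem IsLocalFamily.commutatorFamily {k K : ℕ} (ha : IsLocalFamily k a)
    (hb : IsLocalFamily K b) : IsLocalFamily (K + k) (commutatorFamily a b) := by
  intro Z
  constructor
  · refine IsLocalOn.sum fun p hp => ?_
    rw [(mem_filter.mp hp).2.symm]
    exact ((ha p.1).1.mul (hb p.2).1).sub (union_comm p.2 p.1 ▸ (hb p.2).1.mul (ha p.1).1)
  · intro hZ
    obtain ⟨p, hp, hne⟩ := exists_ne_zero_of_sum_ne_zero hZ
    have hap : a p.1 ≠ 0 := fun h => hne (by simp [h])
    have hbp : b p.2 ≠ 0 := fun h => hne (by simp [h])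
    calc Z.card = (p.1 ∪ p.2).card := by rw [(mem_filter.mp hp).2]
      _ ≤ p.1.card + p.2.card := card_union_le _ _
      _ ≤ k + K := add_le_add ((ha _).2 hap) ((hb _).2 hbp)
      _ = K + k := add_comm k K

theorem sum_norm_commutator_le {g : ℝ} (ha : ∀ X, IsLocalOn X (a X))
    (hg : ∀ i, ∑ X with i ∈ X, ‖a X‖ ≤ g) {Y : Finset ι} {B : Op ι d} (hB : IsLocalOn Y B) :
    ∑ X, ‖a X * B - B * a X‖ ≤ 2 * g * Y.card * ‖B‖ := by
  have hcomm : ∀ X, Disjoint X Y → a X * B - B * a X = 0 := fun X hXY =>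
    sub_eq_zero.mpr ((ha X).commute_of_disjoint hB hXY).eq
  calc ∑ X, ‖a X * B - B * a X‖ = ∑ X with ¬Disjoint X Y, ‖a X * B - B * a X‖ := by
        refine (sum_filter_of_ne fun X _ hX => ?_).symm
        exact fun hXY => hX (by rw [hcomm X hXY, norm_zero])
    _ ≤ ∑ X with ¬Disjoint X Y, 2 * ‖B‖ * ‖a X‖ :=
        sum_le_sum fun X _ => (norm_commutator_le _ _).trans_eq (by ring)
    _ = 2 * ‖B‖ * ∑ X with ¬Disjoint X Y, ‖a X‖ := (mul_sum _ _ _).symm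
    _ ≤ 2 * ‖B‖ * ∑ i ∈ Y, ∑ X with i ∈ X, ‖a X‖ := by
        gcongr
        exact sum_filter_not_disjoint_le (fun X => norm_nonneg _) Y
    _ ≤ 2 * ‖B‖ * ∑ _i ∈ Y, g := by gcongr with i; exact hg i
    _ = 2 * g * Y.card * ‖B‖ := by rw [sum_const, nsmul_eq_mul]; ring

theorem sum_norm_commutatorFamily_le {k K : ℕ} {g : ℝ} (hg0 : 0 ≤ g) (ha : IsLocalFamily k a)
    (hg : ∀ i, ∑ X with i ∈ X, ‖a X‖ ≤ g) (hb : IsLocalFamily K b) :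
    ∑ Z, ‖commutatorFamily a b Z‖ ≤ 2 * g * K * ∑ Y, ‖b Y‖ := by
  calc ∑ Z, ‖commutatorFamily a b Z‖
      ≤ ∑ Z, ∑ p : Finset ι × Finset ι with p.1 ∪ p.2 = Z, ‖a p.1 * b p.2 - b p.2 * a p.1‖ :=
        sum_le_sum fun Z _ => norm_sum_le _ _
    _ = ∑ Y, ∑ X, ‖a X * b Y - b Y * a X‖ := by
        rw [sum_fiberwise univ (fun p : Finset ι × Finset ι => p.1 ∪ p.2)
          (fun p => ‖a p.1 * b p.2 - b p.2 * a p.1‖), Fintype.sum_prod_type, sum_comm]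
    _ ≤ ∑ Y, 2 * g * K * ‖b Y‖ := sum_le_sum fun Y _ => by
        refine (sum_norm_commutator_le (fun X => (ha X).1) hg (hb Y).1).trans ?_
        rcases eq_or_ne (b Y) 0 with hY | hY
        · simp [hY]
        · gcongr
          exact_mod_cast (hb Y).2 hY
    _ = 2 * g * K * ∑ Y, ‖b Y‖ := (mul_sum _ _ _).symm

end CommutatorFamily

theorem sum_Iio_succ {M : ℕ} {R : Type*} [AddCommMonoid R] (f : Fin (M + 1) → R) (s : Fin M) :
    ∑ t ∈ Iio s.succ, f t = f 0 + ∑ t ∈ Iio s, f t.succ := by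
  simp only [← filter_gt_eq_Iio, sum_filter, Fin.sum_univ_succ, Fin.succ_pos, if_true,
    Fin.succ_lt_succ_iff]

theorem foldl_commutator_zero {R : Type*} [Ring R] (l : List R) :
    l.foldl (fun acc A => A * acc - acc * A) 0 = 0 := by
  induction l with
  | nil => rfl
  | cons A l ih => simpa using ih

theorem norm_foldl_commutator_le {M K : ℕ} {k : Fin M → ℕ} {g : Fin M → ℝ}
    {a : Fin M → Finset ι → Op ι d} (hg0 : ∀ s, 0 ≤ g s) (ha : ∀ s, IsLocalFamily (k s) (a s))
    (hg : ∀ s i, ∑ X with i ∈ X, ‖a s X‖ ≤ g s) {b : Finset ι → Op ι d}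
    (hb : IsLocalFamily K b) :
    ‖(List.ofFn fun s => ∑ X, a s X).foldl (fun acc A => A * acc - acc * A) (∑ Y, b Y)‖
      ≤ (∏ s, 2 * g s * (K + ∑ t ∈ Iio s, (k t : ℝ))) * ∑ Y, ‖b Y‖ := by
  induction M generalizing K b with
  | zero => simpa using norm_sum_le _ _
  | succ M ih =>
    rw [List.ofFn_succ, List.foldl_cons, ← sum_commutatorFamily]
    calc _ ≤ (∏ s : Fin M, 2 * g s.succ * (((K + k 0 : ℕ) : ℝ) + ∑ t ∈ Iio s, (k t.succ : ℝ)))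
            * ∑ Z, ‖commutatorFamily (a 0) b Z‖ :=
          ih (fun s => hg0 _) (fun s => ha _) (fun s => hg _) ((ha 0).commutatorFamily hb)
      _ ≤ (∏ s : Fin M, 2 * g s.succ * (((K + k 0 : ℕ) : ℝ) + ∑ t ∈ Iio s, (k t.succ : ℝ)))
            * (2 * g 0 * K * ∑ Y, ‖b Y‖) := by
          gcongr
          · exact prod_nonneg fun s _ => by have := hg0 s.succ; positivity
          · exact sum_norm_commutatorFamily_le (hg0 0) (ha 0) (hg 0) hb
      _ = (∏ s, 2 * g s * (K + ∑ t ∈ Iio s, (k t : ℝ))) * ∑ Y, ‖b Y‖ := by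
          have hIio : Iio (0 : Fin (M + 1)) = ∅ := Iio_bot
          simp only [Fin.prod_univ_succ, sum_Iio_succ, hIio, sum_empty, Nat.cast_add, add_assoc]
          ring

theorem IsLocalOn.isLocalFamily_single {X : Finset ι} {A : Op ι d} (hA : IsLocalOn X A) :
    IsLocalFamily X.card (Pi.single X A) := by
  intro Y
  rcases eq_or_ne Y X with rfl | hY
  · simpa using hA
  · simpa [hY] using IsLocalOn.zero

/-- **Norm bound for multi-commutators of local operators** (Lemma 11): let
`A_1,…,A_M` be operators on `n` qudits with `A_s = ∑_X a_{s,X}`, each `a_{s,X}` supported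
on a set of at most `k_s` sites and `max_i ∑_{X∋i} ‖a_{s,X}‖ ≤ g_s`.  For every operator
`O` supported on `X₀`,
`‖ad_{A_M} ⋯ ad_{A_1}(O)‖ ≤ (∏_m 2 g_m K_m) ‖O‖`, where `K_m = |X₀| + ∑_{s<m} k_s`. -/
theorem multi_commutator_norm_bound (n d M : ℕ)
    (k : Fin M → ℕ) (g : Fin M → ℝ)
    (a : Fin M → Finset (Fin n) → Op (Fin n) d)
    (hsupp : ∀ (s : Fin M) (X : Finset (Fin n)), SupportedOn (X : Set (Fin n)) (a s X))
    (hcard : ∀ (s : Fin M) (X : Finset (Fin n)), a s X ≠ 0 → X.card ≤ k s)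
    (hg : ∀ (s : Fin M) (i : Fin n),
      ∑ X ∈ Finset.univ.filter (fun X : Finset (Fin n) => i ∈ X), opNorm (a s X) ≤ g s)
    (X₀ : Finset (Fin n)) (O : Op (Fin n) d) (hO : SupportedOn (X₀ : Set (Fin n)) O) :
    opNorm (List.foldl (fun acc A => A * acc - acc * A) O
        (List.ofFn fun s : Fin M => ∑ X : Finset (Fin n), a s X))
      ≤ (∏ s : Fin M, 2 * g s * ((X₀.card : ℝ) + ∑ t ∈ Finset.Iio s, (k t : ℝ))) *
          opNorm O := by
  rcases isEmpty_or_nonempty (Fin n) with hn | ⟨⟨i₀⟩⟩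
  · -- without sites every support is empty, so the first commutator already vanishes
    rcases M with _ | M
    · simp
    have hX₀ : X₀ = ∅ := Subsingleton.elim _ _
    have hcomm : Commute (∑ X, a 0 X) O := Commute.sum_left _ _ _ fun X _ =>
      (hsupp 0 X).isLocalOn.commute_of_disjoint hO.isLocalOn (by simp [hX₀])
    have hIio : Iio (0 : Fin (M + 1)) = ∅ := Iio_bot
    rw [List.ofFn_succ, List.foldl_cons, hcomm.eq, sub_self, foldl_commutator_zero]
    simp [opNorm_eq_norm_s19, Fin.prod_univ_succ, hX₀, hIio]
  · have hg0 : ∀ s, 0 ≤ g s := fun s =>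
      (sum_nonneg fun X _ => norm_nonneg (a s X)).trans (hg s i₀)
    have hnorm : ∑ Y, ‖(Pi.single X₀ O : Finset (Fin n) → Op (Fin n) d) Y‖ = ‖O‖ :=
      (Fintype.sum_eq_single X₀ fun Y hY => by simp [hY]).trans (by simp)
    simpa [opNorm_eq_norm_s19, hnorm] using norm_foldl_commutator_le hg0
      (fun s X => ⟨(hsupp s X).isLocalOn, hcard s X⟩) hg hO.isLocalOn.isLocalFamily_single

end Paper
end
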